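/- The polynomial P₁₀ᴱ(T) = (1/7)·[(520+232√5)T⁴ − (320+144√5)T³ − (168+76√5)T² − (30+14√5)T + 5+2√5] satisfies P₁₀ᴱ(99/100) < 0 (indeed P₁₀ᴱ(99/100) = −122341/2500000 − (40154771/87500000)√5) and P₁₀ᴱ(1) = 1 > 0; hence P₁₀ᴱ has a real root α with 99/100 < α < 1. In particular, since 1/√(6+2√5) < 99/100, not all roots of P₁₀ᴱ lie on the circle |T| = 1/√(6+2√5), so the extremal invariant polynomial W₁₀ᴱ does not satisfy the Riemann hypothesis. -/

import Mathlib

/- By the intermediate value theorem `P₁₀ᴱ` has a real root in `(99/100, 1)`, while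
`√(6 + 2√5) = 1 + √5` makes the critical radius `1/(1 + √5)` smaller than `99/100`. -/

noncomputable section

/-- `P₁₀ᴱ` as a real polynomial. -/
def P10E : Polynomial ℝ :=
  Polynomial.C (1 / 7 : ℝ) *
    (Polynomial.C (520 + 232 * Real.sqrt 5) * Polynomial.X ^ 4
      - Polynomial.C (320 + 144 * Real.sqrt 5) * Polynomial.X ^ 3
      - Polynomial.C (168 + 76 * Real.sqrt 5) * Polynomial.X ^ 2
      - Polynomial.C (30 + 14 * Real.sqrt 5) * Polynomial.X
      + Polynomial.C (5 + 2 * Real.sqrt 5))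

open Polynomial

theorem Polynomial.exists_root_mem_Ioo_of_eval_neg_of_eval_pos {p : ℝ[X]} {a b : ℝ}
    (hab : a ≤ b) (ha : p.eval a < 0) (hb : 0 < p.eval b) :
    ∃ α ∈ Set.Ioo a b, p.eval α = 0 :=
  intermediate_value_Ioo hab p.continuous.continuousOn ⟨ha, hb⟩

theorem Polynomial.not_forall_norm_eq_of_isRoot_of_abs_ne {p : ℝ[X]} {α r : ℝ}
    (hα : p.IsRoot α) (hαr : |α| ≠ r) :
    ¬ ∀ z : ℂ, (p.map (algebraMap ℝ ℂ)).IsRoot z → ‖z‖ = r := fun h =>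
  hαr <| by simpa using h α (hα.map (f := algebraMap ℝ ℂ))

theorem P10E_eval (x : ℝ) :
    P10E.eval x = (1 / 7) * ((520 + 232 * √5) * x ^ 4 - (320 + 144 * √5) * x ^ 3
      - (168 + 76 * √5) * x ^ 2 - (30 + 14 * √5) * x + (5 + 2 * √5)) := by
  simp [P10E]

theorem P10E_eval_ninetyNine_div_hundred :
    P10E.eval (99 / 100 : ℝ) = -122341 / 2500000 - (40154771 / 87500000) * √5 := by
  rw [P10E_eval]; ring

theorem P10E_eval_ninetyNine_div_hundred_neg : P10E.eval (99 / 100 : ℝ) < 0 := by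
  rw [P10E_eval_ninetyNine_div_hundred]
  linarith [Real.sqrt_nonneg 5]

theorem P10E_eval_one : P10E.eval (1 : ℝ) = 1 := by
  rw [P10E_eval]; ring

theorem Real.sqrt_six_add_two_mul_sqrt_five : √(6 + 2 * √5) = 1 + √5 := by
  rw [Real.sqrt_eq_iff_mul_self_eq_of_pos (by positivity)]
  nlinarith [Real.mul_self_sqrt (show (0 : ℝ) ≤ 5 by norm_num)]

theorem one_div_sqrt_six_add_two_mul_sqrt_five_lt : 1 / √(6 + 2 * √5) < 99 / 100 := by
  have h2 : (2 : ℝ) < √5 := by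
    rw [Real.lt_sqrt zero_le_two]; norm_num
  rw [Real.sqrt_six_add_two_mul_sqrt_five, div_lt_iff₀ (by positivity)]
  linarith

theorem P10E_no_RH :
    P10E.eval (99 / 100 : ℝ) = -122341 / 2500000 - (40154771 / 87500000) * Real.sqrt 5 ∧
    P10E.eval (99 / 100 : ℝ) < 0 ∧
    P10E.eval (1 : ℝ) = 1 ∧
    (∃ α : ℝ, 99 / 100 < α ∧ α < 1 ∧ P10E.eval α = 0) ∧
    1 / Real.sqrt (6 + 2 * Real.sqrt 5) < 99 / 100 ∧
    ¬ (∀ z : ℂ, (P10E.map (algebraMap ℝ ℂ)).IsRoot z →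
        ‖z‖ = 1 / Real.sqrt (6 + 2 * Real.sqrt 5)) := by
  obtain ⟨α, ⟨hα_gt, hα_lt⟩, hα⟩ :=
    exists_root_mem_Ioo_of_eval_neg_of_eval_pos (b := 1) (by norm_num)
      P10E_eval_ninetyNine_div_hundred_neg (by rw [P10E_eval_one]; norm_num)
  have hr := one_div_sqrt_six_add_two_mul_sqrt_five_lt
  refine ⟨P10E_eval_ninetyNine_div_hundred, P10E_eval_ninetyNine_div_hundred_neg, P10E_eval_one,
    ⟨α, hα_gt, hα_lt, hα⟩, hr, not_forall_norm_eq_of_isRoot_of_abs_ne hα ?_⟩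
  rw [abs_of_pos (by linarith)]
  linarith

end
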